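/- arXiv:2410.00985 — 2 statements merged into one kernel-verified Lean document; each statement's English description precedes it below -/
import Mathlib

section
/- Let T : Ω → ℝ be integrable with mean τ = E[T], and let f : Ω → ℝ be measurable with 0 ≤ f ≤ 1. Define θ⁺(f) = E[(T − τ)·(f − E[f])], θ⁻(f) = E[(T − τ)·((1 − f) − E[1 − f])], θ⁺ = E[(T − τ)·1{T ≥ τ}] and θ⁻ = E[(T − τ)·1{T ≤ τ}]. Then |θ⁺(f) − θ⁻(f)| ≤ θ⁺ − θ⁻. -/
/-!
With `g = T - τ` of mean zero, the contrast `θ⁺(f)` equals `∫ g f`, the complementary contrast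
is its negative, and the right-hand side is `∫ |g|`. Since `g` has mean zero, `∫ g f = ∫ g (f - 1/2)`,
and `|f - 1/2| ≤ 1/2` gives `|∫ g f| ≤ (∫ |g|) / 2`.
-/

open MeasureTheory

section

variable {Ω : Type*} [MeasurableSpace Ω] {μ : Measure Ω}

lemma sub_mul_ite_le_eq_max (a b : ℝ) :
    (a - b) * (if b ≤ a then (1 : ℝ) else 0) = max (a - b) 0 := by
  split_ifs with h
  · rw [mul_one, max_eq_left (sub_nonneg.2 h)]
  · rw [mul_zero, max_eq_right (by linarith)]

lemma sub_mul_ite_le_eq_neg_max (a b : ℝ) :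
    (a - b) * (if a ≤ b then (1 : ℝ) else 0) = -max (-(a - b)) 0 := by
  split_ifs with h
  · rw [mul_one, max_eq_left (by linarith), neg_neg]
  · rw [mul_zero, max_eq_right (by linarith), neg_zero]

lemma integral_sub_mul_ite_le_sub_eq_integral_abs {T : Ω → ℝ} {τ : ℝ}
    (hg : Integrable (fun ω => T ω - τ) μ) :
    (∫ ω, (T ω - τ) * (if τ ≤ T ω then (1 : ℝ) else 0) ∂μ) -
        (∫ ω, (T ω - τ) * (if T ω ≤ τ then (1 : ℝ) else 0) ∂μ) = ∫ ω, |T ω - τ| ∂μ := by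
  simp only [sub_mul_ite_le_eq_max, sub_mul_ite_le_eq_neg_max, integral_neg, sub_neg_eq_add]
  rw [← integral_add hg.pos_part hg.neg_part]
  congr 1 with ω
  rw [max_zero_add_max_neg_zero_eq_abs_self]

lemma integral_mul_sub_const_of_integral_eq_zero {g h : Ω → ℝ} (hg : Integrable g μ)
    (hg0 : ∫ ω, g ω ∂μ = 0) (hgh : Integrable (fun ω => g ω * h ω) μ) (c : ℝ) :
    ∫ ω, g ω * (h ω - c) ∂μ = ∫ ω, g ω * h ω ∂μ := by
  simp only [mul_sub]
  rw [integral_sub hgh (hg.mul_const c), integral_mul_const, hg0, zero_mul, sub_zero]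

lemma abs_integral_mul_sub_const_le {g h : Ω → ℝ} (hg : Integrable g μ)
    (hg0 : ∫ ω, g ω ∂μ = 0) (hh : AEStronglyMeasurable h μ)
    (hh01 : ∀ᵐ ω ∂μ, h ω ∈ Set.Icc 0 1) (c : ℝ) :
    |∫ ω, g ω * (h ω - c) ∂μ| ≤ (∫ ω, |g ω| ∂μ) / 2 := by
  have hgh : Integrable (fun ω => g ω * h ω) μ :=
    hg.mul_bdd hh (c := 1) <| hh01.mono fun ω hω => by
      rw [Real.norm_eq_abs, abs_le]; constructor <;> linarith [hω.1, hω.2]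
  rw [integral_mul_sub_const_of_integral_eq_zero hg hg0 hgh,
    ← integral_mul_sub_const_of_integral_eq_zero hg hg0 hgh (1 / 2),
    ← integral_div 2 (fun ω => |g ω|)]
  refine (Real.norm_eq_abs _).symm.trans_le <|
    norm_integral_le_of_norm_le (hg.abs.div_const 2) (hh01.mono fun ω hω => ?_)
  have : |h ω - 1 / 2| ≤ 1 / 2 := by rw [abs_le]; constructor <;> linarith [hω.1, hω.2]
  rw [Real.norm_eq_abs, abs_mul]
  nlinarith [abs_nonneg (g ω)]

end

lemma integral_one_sub_of_isProbabilityMeasure {Ω : Type*} [MeasurableSpace Ω] {μ : Measure Ω}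
    [IsProbabilityMeasure μ] {f : Ω → ℝ} (hf : Integrable f μ) :
    ∫ ω, (1 - f ω) ∂μ = 1 - ∫ ω, f ω ∂μ := by
  rw [integral_sub (integrable_const 1) hf, integral_const, probReal_univ, one_smul]

theorem stmt4_general {Ω : Type*} [MeasurableSpace Ω] (μ : Measure Ω) [IsProbabilityMeasure μ]
    (T : Ω → ℝ) (hT : Integrable T μ)
    (τ : ℝ) (hτ : τ = ∫ ω, T ω ∂μ)
    (f : Ω → ℝ) (hf : Measurable f) (hf01 : ∀ ω, 0 ≤ f ω ∧ f ω ≤ 1) :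
    |(∫ ω, (T ω - τ) * (f ω - ∫ ω', f ω' ∂μ) ∂μ) -
        (∫ ω, (T ω - τ) * ((1 - f ω) - ∫ ω', (1 - f ω') ∂μ) ∂μ)| ≤
      (∫ ω, (T ω - τ) * (if τ ≤ T ω then (1 : ℝ) else 0) ∂μ) -
        (∫ ω, (T ω - τ) * (if T ω ≤ τ then (1 : ℝ) else 0) ∂μ) := by
  have hg : Integrable (fun ω => T ω - τ) μ := hT.sub (integrable_const τ)
  have hg0 : ∫ ω, (T ω - τ) ∂μ = 0 := by
    rw [integral_sub hT (integrable_const τ), integral_const, probReal_univ, one_smul, hτ, sub_self]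
  have hfi : Integrable f μ :=
    (integrable_const (1 : ℝ)).mono' hf.aestronglyMeasurable <| ae_of_all _ fun ω => by
      rw [Real.norm_eq_abs, abs_le]; constructor <;> linarith [hf01 ω]
  have hcomplement : ∀ ω, (1 - f ω) - ∫ ω', (1 - f ω') ∂μ = -(f ω - ∫ ω', f ω' ∂μ) := fun ω => by
    rw [integral_one_sub_of_isProbabilityMeasure hfi]; ring
  have hbound := abs_integral_mul_sub_const_le hg hg0 hf.aestronglyMeasurable
    (ae_of_all _ fun ω => hf01 ω) (∫ ω', f ω' ∂μ)
  simp only [hcomplement, mul_neg, integral_neg, sub_neg_eq_add, ← two_mul, abs_mul, abs_two]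
  rw [integral_sub_mul_ite_le_sub_eq_integral_abs hg]
  linarith

theorem stmt4 {Ω : Type*} [MeasurableSpace Ω] (μ : Measure Ω) [IsProbabilityMeasure μ]
    (T : Ω → ℝ) (hTm : Measurable T) (hT : Integrable T μ)
    (τ : ℝ) (hτ : τ = ∫ ω, T ω ∂μ)
    (f : Ω → ℝ) (hf : Measurable f) (hf01 : ∀ ω, 0 ≤ f ω ∧ f ω ≤ 1) :
    |(∫ ω, (T ω - τ) * (f ω - ∫ ω', f ω' ∂μ) ∂μ) -
        (∫ ω, (T ω - τ) * ((1 - f ω) - ∫ ω', (1 - f ω') ∂μ) ∂μ)| ≤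
      (∫ ω, (T ω - τ) * (if τ ≤ T ω then (1 : ℝ) else 0) ∂μ) -
        (∫ ω, (T ω - τ) * (if T ω ≤ τ then (1 : ℝ) else 0) ∂μ) :=
  stmt4_general μ T hT τ hτ f hf hf01
end

section
/- Let T : Ω → ℝ be integrable, δ ∈ ℝ, and let F be the set of functions {1{x ≥ c} : c ∈ ℝ} ∪ {1{x ≤ c} : c ∈ ℝ} composed with a measurable X_s : Ω → ℝ. Suppose T = γ(X_s) for a monotone (nondecreasing) function γ : ℝ → ℝ. Then sup over f ∈ F of E[(T − δ)·f(X_s)] equals E[(T − δ)·1{T > δ}], provided the set {x : γ(x) > δ} is of the form {x ≥ c} or {x > c} for some c (which holds by monotonicity) and the boundary set {γ(X_s) = δ, X_s = c} has measure zero. -/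
/-!
Each threshold rule `f` turns `∫ (T - δ) f(Xs)` into the integral of `T - δ` over a measurable
set, which is at most its integral over `{T > δ}`, since `T - δ` is positive exactly there.
Conversely `{T > δ}` is `{Xs ≥ c}` or `{Xs > c}`: in the first case the bound is the value of a
rule, in the second it is the limit of the values of the rules `1{x ≥ a}` as `a ↓ c`.
-/

open MeasureTheory Filter Topology

section

variable {Ω : Type*} [MeasurableSpace Ω] {μ : Measure Ω}

theorem integral_mul_ite_eq_setIntegral {p : Ω → Prop} [DecidablePred p]
    (hp : MeasurableSet {ω | p ω}) (f : Ω → ℝ) :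
    ∫ ω, f ω * (if p ω then 1 else 0) ∂μ = ∫ ω in {ω | p ω}, f ω ∂μ := by
  rw [← integral_indicator hp]
  congr 1 with ω
  by_cases h : p ω <;> simp [h]

theorem setIntegral_le_setIntegral_of_pos_subset {f : Ω → ℝ} {s t : Set Ω}
    (hf : Integrable f μ) (hs : MeasurableSet s) (ht : MeasurableSet t)
    (h_pos : ∀ ω, 0 < f ω → ω ∈ t) (h_nonneg : ∀ ω ∈ t, 0 ≤ f ω) :
    ∫ ω in s, f ω ∂μ ≤ ∫ ω in t, f ω ∂μ := by
  rw [← integral_indicator hs, ← integral_indicator ht]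
  exact integral_mono (hf.indicator hs) (hf.indicator ht) fun ω =>
    Set.indicator_apply_le'
      (fun _ => Set.le_indicator_apply (fun _ => le_rfl) fun hωt => not_lt.1 (mt (h_pos ω) hωt))
      fun _ => Set.indicator_nonneg h_nonneg ω

theorem tendsto_setIntegral_le_nhdsGT {X : Ω → ℝ} (hX : Measurable X) {f : Ω → ℝ}
    (hf : Integrable f μ) (c : ℝ) :
    Tendsto (fun x => ∫ ω in {ω | x ≤ X ω}, f ω ∂μ) (𝓝[>] c)
      (𝓝 (∫ ω in {ω | c < X ω}, f ω ∂μ)) := by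
  have hmeas : ∀ x, MeasurableSet {ω | x ≤ X ω} := fun x => measurableSet_le measurable_const hX
  simp_rw [← integral_indicator (hmeas _),
    ← integral_indicator (measurableSet_lt measurable_const hX)]
  refine tendsto_integral_filter_of_dominated_convergence (fun ω => ‖f ω‖)
    (.of_forall fun x => (hf.indicator (hmeas x)).aestronglyMeasurable)
    (.of_forall fun x => .of_forall fun ω => norm_indicator_le_norm_self f ω) hf.norm
    (.of_forall fun ω => ?_)
  by_cases hω : c < X ω
  · refine tendsto_const_nhds.congr' ?_
    filter_upwards [Ioo_mem_nhdsGT hω] with x hx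
    simp [Set.indicator_of_mem, hω, hx.2.le]
  · refine tendsto_const_nhds.congr' ?_
    filter_upwards [self_mem_nhdsWithin] with x (hx : c < x)
    have : ¬ x ≤ X ω := fun h => hω (hx.trans_le h)
    simp [hω, this]

end

theorem stmt19_general {Ω : Type*} [MeasurableSpace Ω] (μ : Measure Ω) [IsProbabilityMeasure μ]
    (Xs : Ω → ℝ) (hXs : Measurable Xs)
    (γ : ℝ → ℝ)
    (hint : Integrable (fun ω => γ (Xs ω)) μ) (δ : ℝ)
    (F : Set (ℝ → ℝ))
    (hF : F = {f | ∃ c : ℝ, f = fun x => if c ≤ x then (1 : ℝ) else 0} ∪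
              {f | ∃ c : ℝ, f = fun x => if x ≤ c then (1 : ℝ) else 0})
    (c : ℝ)
    (hray : {x : ℝ | δ < γ x} = {x : ℝ | c ≤ x} ∨ {x : ℝ | δ < γ x} = {x : ℝ | c < x}) :
    IsLUB ((fun f : ℝ → ℝ => ∫ ω, (γ (Xs ω) - δ) * f (Xs ω) ∂μ) '' F)
      (∫ ω, (γ (Xs ω) - δ) * (if δ < γ (Xs ω) then (1 : ℝ) else 0) ∂μ) := by
  have hT : Integrable (fun ω => γ (Xs ω) - δ) μ := hint.sub (integrable_const δ)
  have hopt : MeasurableSet {ω | δ < γ (Xs ω)} := by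
    refine hXs (?_ : MeasurableSet {x | δ < γ x})
    rcases hray with h | h <;> rw [h]
    exacts [measurableSet_Ici, measurableSet_Ioi]
  have hrule : ∀ a, ∫ ω in {ω | a ≤ Xs ω}, γ (Xs ω) - δ ∂μ ∈
      (fun f : ℝ → ℝ => ∫ ω, (γ (Xs ω) - δ) * f (Xs ω) ∂μ) '' F := fun a =>
    ⟨_, by rw [hF]; exact Or.inl ⟨a, rfl⟩,
      integral_mul_ite_eq_setIntegral (measurableSet_le measurable_const hXs) _⟩
  rw [integral_mul_ite_eq_setIntegral hopt]
  refine isLUB_of_mem_closure ?_ ?_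
  · have hle : ∀ (p : Ω → Prop) [DecidablePred p], MeasurableSet {ω | p ω} →
        ∫ ω, (γ (Xs ω) - δ) * (if p ω then 1 else 0) ∂μ ≤
          ∫ ω in {ω | δ < γ (Xs ω)}, γ (Xs ω) - δ ∂μ := fun p _ hp =>
      (integral_mul_ite_eq_setIntegral hp _).trans_le <|
        setIntegral_le_setIntegral_of_pos_subset hT hp hopt (fun _ => sub_pos.1)
          fun _ h => (sub_pos.2 h).le
    rintro _ ⟨f, hf, rfl⟩
    rw [hF] at hf
    rcases hf with ⟨a, rfl⟩ | ⟨a, rfl⟩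
    · exact hle _ (measurableSet_le measurable_const hXs)
    · exact hle _ (measurableSet_le hXs measurable_const)
  · rcases hray with h | h
    · rw [show {ω | δ < γ (Xs ω)} = {ω | c ≤ Xs ω} from congrArg (Xs ⁻¹' ·) h]
      exact subset_closure (hrule c)
    · rw [show {ω | δ < γ (Xs ω)} = {ω | c < Xs ω} from congrArg (Xs ⁻¹' ·) h]
      exact mem_closure_of_tendsto (tendsto_setIntegral_le_nhdsGT hXs hT c) (.of_forall hrule)

/-- Correct specification of the one-sided threshold class for monotone CATE:
if `T = γ ∘ Xs` with `γ` nondecreasing, the supremum of `θ⁺(f)` over the class of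
one-sided threshold rules in `Xs` equals `θ⁺` evaluated at the optimal rule
`1{T > δ}`, provided `{x | γ x > δ}` is a one-sided ray with endpoint `c` and the
boundary set `{γ(Xs) = δ} ∩ {Xs = c}` has measure zero. -/
theorem stmt19 {Ω : Type*} [MeasurableSpace Ω] (μ : Measure Ω) [IsProbabilityMeasure μ]
    (Xs : Ω → ℝ) (hXs : Measurable Xs)
    (γ : ℝ → ℝ) (hγ : Monotone γ)
    (hint : Integrable (fun ω => γ (Xs ω)) μ) (δ : ℝ)
    (F : Set (ℝ → ℝ))
    (hF : F = {f | ∃ c : ℝ, f = fun x => if c ≤ x then (1 : ℝ) else 0} ∪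
              {f | ∃ c : ℝ, f = fun x => if x ≤ c then (1 : ℝ) else 0})
    (c : ℝ)
    (hray : {x : ℝ | δ < γ x} = {x : ℝ | c ≤ x} ∨ {x : ℝ | δ < γ x} = {x : ℝ | c < x})
    (hbd : μ {ω | γ (Xs ω) = δ ∧ Xs ω = c} = 0) :
    IsLUB ((fun f : ℝ → ℝ => ∫ ω, (γ (Xs ω) - δ) * f (Xs ω) ∂μ) '' F)
      (∫ ω, (γ (Xs ω) - δ) * (if δ < γ (Xs ω) then (1 : ℝ) else 0) ∂μ) :=
  stmt19_general μ Xs hXs γ hint δ F hF c hray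
end
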